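/- arXiv:2009.11083 — 4 statements merged into one kernel-verified Lean document; each statement's English description precedes it below -/
import Mathlib

section
/- Let μ be a positive Radon measure on Ω and let D_μ = {λ ∈ F' : ∫_Ω e^{−⟨λ,h⟩} dμ(h) < ∞}. Then D_μ + cl(Ω') ⊆ D_μ (so D_μ is a union of translates of cl(Ω')); moreover, if D_μ ≠ ∅, then μ(Ω ∩ K) < ∞ for every compact subset K of F, i.e. μ extends to a Radon measure on cl(Ω). -/
open Set MeasureTheory
open scoped ENNReal

/-!
Both parts are monotonicity of the Laplace integral. A functional in `cl Ω'` is nonnegative on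
`Ω`, which carries `μ`, so adding it can only shrink the integrand `e^{-l}`. On a compact `K` the
continuous integrand `e^{-l}` is bounded below by a positive constant, so Markov's inequality
bounds `μ K`, and hence `μ (Ω ∩ K)`, by a multiple of the integral.
-/

lemma ContinuousLinearMap.nonneg_of_mem_closure_setOf_pos {E : Type*} [AddCommGroup E]
    [TopologicalSpace E] [Module ℝ E] [ContinuousSMul ℝ E] {S : Set E} {ρ : E →L[ℝ] ℝ}
    (hρ : ρ ∈ closure {l : E →L[ℝ] ℝ | ∀ h ∈ S, h ≠ 0 → 0 < l h}) {h : E} (hh : h ∈ S) :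
    0 ≤ ρ h := by
  refine closure_minimal (fun l hl => ?_)
    (isClosed_le continuous_const (continuous_eval_const h)) hρ
  rcases eq_or_ne h 0 with rfl | hne
  · simp
  · exact (hl h hh hne).le

lemma lintegral_ofReal_exp_neg_add_le {α : Type*} [MeasurableSpace α] {μ : Measure α}
    {f g : α → ℝ} (hg : 0 ≤ᵐ[μ] g) :
    ∫⁻ x, ENNReal.ofReal (Real.exp (-(f x + g x))) ∂μ ≤
      ∫⁻ x, ENNReal.ofReal (Real.exp (-f x)) ∂μ :=
  lintegral_mono_ae <| hg.mono fun x hx =>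
    ENNReal.ofReal_le_ofReal <| Real.exp_le_exp.2 <| by simp only [Pi.zero_apply] at hx; linarith

lemma IsCompact.measure_lt_top_of_lintegral_ofReal_exp_lt_top {X : Type*} [TopologicalSpace X]
    [MeasurableSpace X] [OpensMeasurableSpace X] {μ : Measure X} {f : X → ℝ} (hf : Continuous f)
    {K : Set X} (hK : IsCompact K) (hint : ∫⁻ x, ENNReal.ofReal (Real.exp (f x)) ∂μ < ⊤) :
    μ K < ⊤ := by
  obtain ⟨m, hm⟩ := hK.bddBelow_image hf.continuousOn
  have hε : ENNReal.ofReal (Real.exp m) ≠ 0 := (ENNReal.ofReal_pos.2 (Real.exp_pos m)).ne'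
  have hK_sub : K ⊆ {x | ENNReal.ofReal (Real.exp m) ≤ ENNReal.ofReal (Real.exp (f x))} :=
    fun x hx => ENNReal.ofReal_le_ofReal <| Real.exp_le_exp.2 <| hm (mem_image_of_mem f hx)
  have hmeas : AEMeasurable (fun x => ENNReal.ofReal (Real.exp (f x))) μ := by fun_prop
  exact measure_lt_top_of_subset hK_sub <| ne_top_of_le_ne_top
    (ENNReal.div_ne_top hint.ne hε) (meas_ge_le_lintegral_div hmeas hε ENNReal.ofReal_ne_top)

theorem stmt_4_general {F : Type*}
    [NormedAddCommGroup F] [NormedSpace ℝ F]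
    [MeasurableSpace F] [BorelSpace F]
    (Ω : Set F)
    (μ : Measure F) (hsupp : μ Ωᶜ = 0)
    (Ω' : Set (F →L[ℝ] ℝ))
    (hΩ' : Ω' = {l : F →L[ℝ] ℝ | ∀ h ∈ closure Ω, h ≠ 0 → 0 < l h})
    (Dμ : Set (F →L[ℝ] ℝ))
    (hDμ : Dμ = {l : F →L[ℝ] ℝ |
      ∫⁻ h, ENNReal.ofReal (Real.exp (-(l h))) ∂μ < ⊤}) :
    (∀ l ∈ Dμ, ∀ ρ ∈ closure Ω', l + ρ ∈ Dμ) ∧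
    (Dμ.Nonempty → ∀ K : Set F, IsCompact K → μ (Ω ∩ K) < ⊤) := by
  subst hΩ' hDμ
  have hΩ_ae : ∀ᵐ h ∂μ, h ∈ Ω := hsupp
  refine ⟨fun l hl ρ hρ => ?_, fun ⟨l, hl⟩ K hK => ?_⟩
  · have hρ_nonneg : 0 ≤ᵐ[μ] fun h => ρ h := hΩ_ae.mono fun h hh =>
      ρ.nonneg_of_mem_closure_setOf_pos hρ (subset_closure hh)
    exact (lintegral_ofReal_exp_neg_add_le hρ_nonneg).trans_lt hl
  · exact measure_lt_top_of_subset inter_subset_right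
      (hK.measure_lt_top_of_lintegral_ofReal_exp_lt_top (f := fun h => -l h) (by fun_prop) hl).ne

/-- For a positive Radon measure `μ` on a proper open convex cone `Ω`,
the domain `D_μ = {λ : ∫_Ω e^{−⟨λ,h⟩} dμ < ∞}` of the Laplace transform satisfies
`D_μ + cl(Ω') ⊆ D_μ`; moreover, if `D_μ ≠ ∅` then `μ` is finite on `Ω ∩ K` for every
compact `K ⊆ F`, i.e. `μ` extends to a Radon measure on `cl Ω`. -/
theorem stmt_4 {F : Type*}
    [NormedAddCommGroup F] [NormedSpace ℝ F] [FiniteDimensional ℝ F]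
    [MeasurableSpace F] [BorelSpace F]
    (Ω : Set F) (hΩo : IsOpen Ω) (hΩc : Convex ℝ Ω)
    (hΩcone : ∀ r : ℝ, 0 < r → ∀ h ∈ Ω, r • h ∈ Ω)
    (hproper : ∀ x ∈ closure Ω, -x ∈ closure Ω → x = 0)
    (μ : Measure F) (hsupp : μ Ωᶜ = 0)
    (hRadon : ∀ K : Set F, IsCompact K → K ⊆ Ω → μ K < ⊤)
    (Ω' : Set (F →L[ℝ] ℝ))
    (hΩ' : Ω' = {l : F →L[ℝ] ℝ | ∀ h ∈ closure Ω, h ≠ 0 → 0 < l h})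
    (Dμ : Set (F →L[ℝ] ℝ))
    (hDμ : Dμ = {l : F →L[ℝ] ℝ |
      ∫⁻ h, ENNReal.ofReal (Real.exp (-(l h))) ∂μ < ⊤}) :
    (∀ l ∈ Dμ, ∀ ρ ∈ closure Ω', l + ρ ∈ Dμ) ∧
    (Dμ.Nonempty → ∀ K : Set F, IsCompact K → μ (Ω ∩ K) < ⊤) :=
  stmt_4_general Ω μ hsupp Ω' hΩ' Dμ hDμ
end

section
/- Let ν be a positive Radon measure on the dual cone Ω' such that ∫_{Ω'} e^{−⟨λ,k⟩} dν(λ) < ∞ for every k ∈ Ω. Let τ : Ω' → [0,∞] be measurable and h₀ ∈ Ω with ∫_{Ω'} τ(λ)² e^{−2⟨λ,h₀⟩} dν(λ) < ∞. Then for every p ∈ [1,2] and every h ∈ h₀ + Ω, the quantity g_p(h) := ∫_{Ω'} τ(λ)^p e^{−p⟨λ,h⟩} dν(λ) is finite; moreover g_p is decreasing for the cone order (if h'' − h ∈ cl(Ω) then g_p(h'') ≤ g_p(h)) and continuous on h₀ + Ω. -/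
/-!
Pointwise, `τ^p e^{-p⟨λ,h⟩} = (τ² e^{-2⟨λ,h₀⟩})^{p/2} e^{-p⟨λ,h-h₀⟩}`, and since `p/2 ≤ 1`
and `A^{p/2} ≤ 1 + A`, this is at most `e^{-⟨λ,p(h-h₀)⟩} + τ² e^{-2⟨λ,h₀⟩}`: the first term is
integrable by the finiteness of the Laplace transform of `ν` at `p(h-h₀) ∈ Ω`, the second by
hypothesis. Monotonicity is pointwise, because `⟨λ, ·⟩ ≥ 0` on `cl Ω` for `ν`-a.e. `λ`.
Continuity at `h₁` follows by dominated convergence, dominating by the integrand at the midpoint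
of `h₀` and `h₁`, which lies below a whole neighbourhood of `h₁` in the cone order.
-/

open Set MeasureTheory Filter
open scoped ENNReal Topology

lemma ENNReal.rpow_le_one_add (x : ℝ≥0∞) {q : ℝ} (hq0 : 0 ≤ q) (hq1 : q ≤ 1) :
    x ^ q ≤ 1 + x := by
  rcases le_or_gt x 1 with hx | hx
  · exact (ENNReal.rpow_le_one hx hq0).trans le_self_add
  · calc x ^ q ≤ x ^ (1 : ℝ) := ENNReal.rpow_le_rpow_of_exponent_le hx.le hq1
      _ = x := ENNReal.rpow_one x
      _ ≤ 1 + x := le_add_self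

lemma rpow_mul_exp_neg_le_of_le (t : ℝ≥0∞) {a b p : ℝ} (hp : 0 ≤ p) (hab : a ≤ b) :
    t ^ p * ENNReal.ofReal (Real.exp (-(p * b))) ≤ t ^ p * ENNReal.ofReal (Real.exp (-(p * a))) :=
  mul_le_mul_right (ENNReal.ofReal_le_ofReal (Real.exp_le_exp.2 (by nlinarith))) _

lemma rpow_mul_exp_neg_le_add (t : ℝ≥0∞) {a b p : ℝ} (hp0 : 0 ≤ p) (hp2 : p ≤ 2) (hab : a ≤ b) :
    t ^ p * ENNReal.ofReal (Real.exp (-(p * b))) ≤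
      ENNReal.ofReal (Real.exp (-(p * (b - a)))) +
        t ^ (2 : ℝ) * ENNReal.ofReal (Real.exp (-(2 * a))) := by
  set A := t ^ (2 : ℝ) * ENNReal.ofReal (Real.exp (-(2 * a)))
  set E := ENNReal.ofReal (Real.exp (-(p * (b - a))))
  have hsplit : t ^ p * ENNReal.ofReal (Real.exp (-(p * b))) = A ^ (p / 2) * E := by
    rw [ENNReal.mul_rpow_of_nonneg _ _ (by positivity), ← ENNReal.rpow_mul,
      ENNReal.ofReal_rpow_of_pos (Real.exp_pos _), ← Real.exp_mul, mul_assoc,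
      ← ENNReal.ofReal_mul (Real.exp_pos _).le, ← Real.exp_add]
    congr 3 <;> ring
  have hE : E ≤ 1 :=
    ENNReal.ofReal_le_one.2 (Real.exp_le_one_iff.2 (by nlinarith))
  calc t ^ p * ENNReal.ofReal (Real.exp (-(p * b))) = A ^ (p / 2) * E := hsplit
    _ ≤ (1 + A) * E := mul_le_mul_left (A.rpow_le_one_add (by positivity) (by linarith)) _
    _ = E + A * E := by ring
    _ ≤ E + A := add_le_add_right (mul_le_of_le_one_right' hE) _

section PowExpKernel

variable {F : Type*} [NormedAddCommGroup F] [NormedSpace ℝ F]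
  [MeasurableSpace (F →L[ℝ] ℝ)] {ν : Measure (F →L[ℝ] ℝ)} {τ : (F →L[ℝ] ℝ) → ℝ≥0∞} {p : ℝ}

noncomputable def powExpKernel (τ : (F →L[ℝ] ℝ) → ℝ≥0∞) (p : ℝ) (h : F)
    (l : F →L[ℝ] ℝ) : ℝ≥0∞ :=
  τ l ^ p * ENNReal.ofReal (Real.exp (-(p * l h)))

lemma measurable_ofReal_exp_neg_apply [OpensMeasurableSpace (F →L[ℝ] ℝ)] (c : ℝ) (h : F) :
    Measurable fun l : F →L[ℝ] ℝ => ENNReal.ofReal (Real.exp (-(c * l h))) :=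
  ENNReal.measurable_ofReal.comp <| Real.measurable_exp.comp <|
    (measurable_const.mul (ContinuousLinearMap.apply ℝ ℝ h).continuous.measurable).neg

lemma measurable_powExpKernel [OpensMeasurableSpace (F →L[ℝ] ℝ)] (hτ : Measurable τ)
    (p : ℝ) (h : F) : Measurable (powExpKernel τ p h) :=
  (hτ.pow_const p).mul (measurable_ofReal_exp_neg_apply p h)

lemma ae_apply_le_apply_of_sub_mem {C : Set F} (hν : ∀ᵐ l ∂ν, ∀ x ∈ C, x ≠ 0 → 0 < l x)
    {h h'' : F} (hh : h'' - h ∈ C) : ∀ᵐ l ∂ν, l h ≤ l h'' :=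
  hν.mono fun l hl => by
    rcases eq_or_ne (h'' - h) 0 with heq | hne
    · rw [sub_eq_zero.1 heq]
    · linarith [map_sub l h'' h ▸ hl _ hh hne]

lemma lintegral_powExpKernel_mono (hp : 0 ≤ p) {h h'' : F} (hle : ∀ᵐ l ∂ν, l h ≤ l h'') :
    ∫⁻ l, powExpKernel τ p h'' l ∂ν ≤ ∫⁻ l, powExpKernel τ p h l ∂ν :=
  lintegral_mono_ae <| hle.mono fun l hl => rpow_mul_exp_neg_le_of_le (τ l) hp hl

lemma lintegral_powExpKernel_lt_top [OpensMeasurableSpace (F →L[ℝ] ℝ)] (hp0 : 0 ≤ p)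
    (hp2 : p ≤ 2) {h₀ h : F} (hle : ∀ᵐ l ∂ν, l h₀ ≤ l h)
    (hexp : ∫⁻ l, ENNReal.ofReal (Real.exp (-(p * l (h - h₀)))) ∂ν < ⊤)
    (hfin : ∫⁻ l, powExpKernel τ 2 h₀ l ∂ν < ⊤) :
    ∫⁻ l, powExpKernel τ p h l ∂ν < ⊤ :=
  calc ∫⁻ l, powExpKernel τ p h l ∂ν
      ≤ ∫⁻ l, (ENNReal.ofReal (Real.exp (-(p * l (h - h₀)))) + powExpKernel τ 2 h₀ l) ∂ν :=
        lintegral_mono_ae <| hle.mono fun l hl =>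
          (rpow_mul_exp_neg_le_add (τ l) hp0 hp2 hl).trans_eq (by rw [map_sub]; rfl)
    _ = ∫⁻ l, ENNReal.ofReal (Real.exp (-(p * l (h - h₀)))) ∂ν +
          ∫⁻ l, powExpKernel τ 2 h₀ l ∂ν :=
        lintegral_add_left (measurable_ofReal_exp_neg_apply p (h - h₀)) _
    _ < ⊤ := ENNReal.add_lt_top.2 ⟨hexp, hfin⟩

lemma continuousAt_lintegral_powExpKernel [OpensMeasurableSpace (F →L[ℝ] ℝ)]
    (hτ : Measurable τ) (hp : 0 ≤ p) {h' h₁ : F}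
    (hfin : ∫⁻ l, powExpKernel τ p h' l ∂ν < ⊤)
    (hle : ∀ᶠ h in 𝓝 h₁, ∀ᵐ l ∂ν, l h' ≤ l h) :
    ContinuousAt (fun h => ∫⁻ l, powExpKernel τ p h l ∂ν) h₁ := by
  refine tendsto_lintegral_filter_of_dominated_convergence (powExpKernel τ p h')
    (Eventually.of_forall (measurable_powExpKernel hτ p))
    (hle.mono fun h hh => hh.mono fun l hl => rpow_mul_exp_neg_le_of_le (τ l) hp hl)
    hfin.ne (Eventually.of_forall fun l => ?_)
  exact ENNReal.Tendsto.const_mul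
    ((ENNReal.continuous_ofReal.comp (Real.continuous_exp.comp
      ((continuous_const.mul l.continuous).neg))).tendsto h₁)
    (Or.inl (by positivity))

end PowExpKernel

theorem stmt_6_general {F : Type*}
    [NormedAddCommGroup F] [NormedSpace ℝ F]
    [MeasurableSpace (F →L[ℝ] ℝ)] [BorelSpace (F →L[ℝ] ℝ)]
    (Ω : Set F) (hΩo : IsOpen Ω)
    (hΩcone : ∀ r : ℝ, 0 < r → ∀ h ∈ Ω, r • h ∈ Ω)
    (Ω' : Set (F →L[ℝ] ℝ))
    (hΩ' : Ω' = {l : F →L[ℝ] ℝ | ∀ h ∈ closure Ω, h ≠ 0 → 0 < l h})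
    (ν : Measure (F →L[ℝ] ℝ)) (hνsupp : ν Ω'ᶜ = 0)
    (hνexp : ∀ k ∈ Ω, ∫⁻ l, ENNReal.ofReal (Real.exp (-(l k))) ∂ν < ⊤)
    (τ : (F →L[ℝ] ℝ) → ℝ≥0∞) (hτ : Measurable τ)
    (h₀ : F)
    (hfin : ∫⁻ l, τ l ^ (2 : ℝ) * ENNReal.ofReal (Real.exp (-(2 * l h₀))) ∂ν < ⊤)
    (g : ℝ → F → ℝ≥0∞)
    (hg : ∀ (p : ℝ) (h : F),
      g p h = ∫⁻ l, τ l ^ p * ENNReal.ofReal (Real.exp (-(p * l h))) ∂ν) :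
    ∀ p ∈ Set.Icc (1 : ℝ) 2,
      (∀ h : F, h - h₀ ∈ Ω → g p h < ⊤) ∧
      (∀ h : F, h - h₀ ∈ Ω → ∀ h'' : F, h'' - h ∈ closure Ω → g p h'' ≤ g p h) ∧
      ContinuousOn (g p) {h : F | h - h₀ ∈ Ω} := by
  intro p ⟨hp1, hp2⟩
  have hp0 : 0 < p := zero_lt_one.trans_le hp1
  have hg_eq : g p = fun h => ∫⁻ l, powExpKernel τ p h l ∂ν := funext (hg p)
  have hdual : ∀ᵐ l ∂ν, ∀ x ∈ closure Ω, x ≠ 0 → 0 < l x := by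
    subst hΩ'
    exact ae_iff.2 hνsupp
  have hle {h h'' : F} (hh : h'' - h ∈ closure Ω) : ∀ᵐ l ∂ν, l h ≤ l h'' :=
    ae_apply_le_apply_of_sub_mem hdual hh
  have hfinite : ∀ h : F, h - h₀ ∈ Ω → g p h < ⊤ := fun h hh => by
    rw [hg_eq]
    refine lintegral_powExpKernel_lt_top hp0.le hp2 (hle (subset_closure hh)) ?_ hfin
    simpa only [map_smul, smul_eq_mul] using hνexp _ (hΩcone p hp0 _ hh)
  refine ⟨hfinite, fun h _ h'' hh'' => hg_eq ▸ lintegral_powExpKernel_mono hp0.le (hle hh''), ?_⟩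
  intro h₁ hh₁
  have hhalf : (2 : ℝ)⁻¹ • (h₁ - h₀) ∈ Ω := hΩcone _ (by norm_num) _ hh₁
  set h' := h₀ + (2 : ℝ)⁻¹ • (h₁ - h₀)
  have hh' : h' - h₀ ∈ Ω := by rwa [add_sub_cancel_left]
  have hh₁h' : h₁ - h' ∈ Ω := by convert hhalf using 1; module
  have hnhds : ∀ᶠ h in 𝓝 h₁, h - h' ∈ Ω :=
    (hΩo.preimage (continuous_sub_right h')).eventually_mem hh₁h'
  rw [hg_eq]
  refine (continuousAt_lintegral_powExpKernel (h' := h') hτ hp0.le ?_ ?_).continuousWithinAt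
  · simpa only [hg_eq] using hfinite h' hh'
  · exact hnhds.mono fun h hh => hle (subset_closure hh)

/-- Let `ν` be a positive Radon measure on the dual cone `Ω'` whose
Laplace transform is finite on `Ω`, and let `τ ≥ 0` be measurable with
`∫ τ(λ)² e^{−2⟨λ,h₀⟩} dν < ∞` for some `h₀ ∈ Ω`. Then for every `p ∈ [1,2]` the
function `g_p(h) = ∫ τ(λ)^p e^{−p⟨λ,h⟩} dν(λ)` is finite on `h₀ + Ω`, decreasing for
the cone order, and continuous on `h₀ + Ω`. -/
theorem stmt_6 {F : Type*}
    [NormedAddCommGroup F] [NormedSpace ℝ F] [FiniteDimensional ℝ F]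
    [MeasurableSpace (F →L[ℝ] ℝ)] [BorelSpace (F →L[ℝ] ℝ)]
    (Ω : Set F) (hΩo : IsOpen Ω) (hΩc : Convex ℝ Ω)
    (hΩcone : ∀ r : ℝ, 0 < r → ∀ h ∈ Ω, r • h ∈ Ω)
    (hproper : ∀ x ∈ closure Ω, -x ∈ closure Ω → x = 0)
    (Ω' : Set (F →L[ℝ] ℝ))
    (hΩ' : Ω' = {l : F →L[ℝ] ℝ | ∀ h ∈ closure Ω, h ≠ 0 → 0 < l h})
    (ν : Measure (F →L[ℝ] ℝ)) (hνsupp : ν Ω'ᶜ = 0)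
    (hνexp : ∀ k ∈ Ω, ∫⁻ l, ENNReal.ofReal (Real.exp (-(l k))) ∂ν < ⊤)
    (τ : (F →L[ℝ] ℝ) → ℝ≥0∞) (hτ : Measurable τ)
    (h₀ : F) (hh₀ : h₀ ∈ Ω)
    (hfin : ∫⁻ l, τ l ^ (2 : ℝ) * ENNReal.ofReal (Real.exp (-(2 * l h₀))) ∂ν < ⊤)
    (g : ℝ → F → ℝ≥0∞)
    (hg : ∀ (p : ℝ) (h : F),
      g p h = ∫⁻ l, τ l ^ p * ENNReal.ofReal (Real.exp (-(p * l h))) ∂ν) :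
    ∀ p ∈ Set.Icc (1 : ℝ) 2,
      (∀ h : F, h - h₀ ∈ Ω → g p h < ⊤) ∧
      (∀ h : F, h - h₀ ∈ Ω → ∀ h'' : F, h'' - h ∈ closure Ω → g p h'' ≤ g p h) ∧
      ContinuousOn (g p) {h : F | h - h₀ ∈ Ω} :=
  stmt_6_general Ω hΩo hΩcone Ω' hΩ' ν hνsupp hνexp τ hτ h₀ hfin g hg
end

section
/- Let J and K be sets and p, q ∈ (0,∞]. Set p' := (max(1,p))' and q' := (max(1,q))' (so p' = ∞ when p ≤ 1 and 1/p + 1/p' = 1 when p ≥ 1). Then the bilinear map (λ,μ) ↦ Σ_{(j,k)∈J×K} λ_{j,k} μ_{j,k} induces an isometric isomorphism of ℓ^{p',q'}(J,K) onto the topological dual of ℓ^{p,q}_0(J,K): every continuous linear functional L on ℓ^{p,q}_0(J,K) is of this form for a unique μ ∈ ℓ^{p',q'}(J,K), and the operator norm of L equals ‖μ‖_{ℓ^{p',q'}}. -/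
/-!
Hölder's inequality, applied in `j` and then in `k`, bounds the pairing by
`‖λ‖_{ℓ^{p,q}} ‖μ‖_{ℓ^{p',q'}}`; for an exponent `p ≤ 1` it reads
`∑ a b ≤ (∑ a) sup b ≤ ‖a‖_{ℓ^p} sup b`, since `ℓ^p ⊆ ℓ^1` contractively.

For the reverse inequality, truncate the column norms `B_k = ‖μ_{·,k}‖_{ℓ^{p'}}` to a finitely
supported finite family; it is normed by the classical extremiser `w` (a point mass, the indicator
of the support, or `B^{q'-1}` after normalisation). Filling column `k` of `w` with a
near-extremiser for `|μ_{·,k}|`, with a little room to spare, gives a finitely supported `λ` in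
the unit ball whose pairing with `|μ|` nearly attains `‖μ‖_{ℓ^{p',q'}}`; multiplying by the
conjugate phase of `μ` transfers this to the complex pairing.

A bounded linear `L` agrees with the pairing against `μ_{jk} = L(e_{jk})` on finitely supported
families, so the above gives `‖μ‖_{ℓ^{p',q'}} ≤ ‖L‖`, and the difference of the two bounded
functionals vanishes on the closure `ℓ^{p,q}_0` of those families.
-/

open scoped ENNReal NNReal

/-- The `ℓ^p` (quasi-)norm of a family of complex numbers, `p ∈ (0,∞]`. -/
noncomputable def ellpNorm {ι : Type*} (p : ℝ≥0∞) (f : ι → ℂ) : ℝ≥0∞ :=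
  if p = ∞ then ⨆ i, (‖f i‖₊ : ℝ≥0∞)
  else (∑' i, (‖f i‖₊ : ℝ≥0∞) ^ p.toReal) ^ (1 / p.toReal)

/-- The mixed `ℓ^{p,q}` (quasi-)norm on `ℂ^{J×K}`: the `ℓ^q` norm over `K` of the
`ℓ^p` norms over `J`. -/
noncomputable def ellpqNorm {J K : Type*} (p q : ℝ≥0∞) (f : J × K → ℂ) : ℝ≥0∞ :=
  if q = ∞ then ⨆ k, ellpNorm p (fun j => f (j, k))
  else (∑' k, (ellpNorm p (fun j => f (j, k))) ^ q.toReal) ^ (1 / q.toReal)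

/-- The conjugate exponent `p' = (max(1,p))'`: `p' = ∞` for `p ≤ 1`,
`1/p + 1/p' = 1` for `1 ≤ p ≤ ∞`. -/
noncomputable def conjExp (p : ℝ≥0∞) : ℝ≥0∞ :=
  if p ≤ 1 then ∞ else if p = ∞ then 1 else p / (p - 1)

/-- Membership in `ℓ^{p,q}_0(J,K)`, the closure of the finitely supported families in
`ℓ^{p,q}(J,K)`. -/
def memEllpq0 {J K : Type*} (p q : ℝ≥0∞) (f : J × K → ℂ) : Prop :=
  ellpqNorm p q f < ⊤ ∧
  ∀ ε : ℝ, 0 < ε → ∃ g : J × K → ℂ, (Function.support g).Finite ∧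
    ellpqNorm p q (f - g) < ENNReal.ofReal ε

open Function

section ConjExp

lemma conjExp_of_le_one {p : ℝ≥0∞} (h : p ≤ 1) : conjExp p = ∞ := by simp [conjExp, h]

lemma conjExp_top : conjExp ∞ = 1 := by simp [conjExp]

lemma conjExp_of_one_lt_of_ne_top {p : ℝ≥0∞} (h1 : 1 < p) (h2 : p ≠ ∞) :
    conjExp p = p / (p - 1) := by
  simp [conjExp, not_le.mpr h1, h2]

lemma conjExp_pos (p : ℝ≥0∞) : 0 < conjExp p := by
  rcases le_or_gt p 1 with h1 | h1
  · simp [conjExp_of_le_one h1]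
  rcases eq_or_ne p ∞ with rfl | h2
  · simp [conjExp_top]
  rw [conjExp_of_one_lt_of_ne_top h1 h2]
  exact ENNReal.div_pos (zero_lt_one.trans h1).ne' (ENNReal.sub_ne_top h2)

lemma conjExp_ne_top {p : ℝ≥0∞} (h1 : 1 < p) : conjExp p ≠ ∞ := by
  rcases eq_or_ne p ∞ with rfl | h2
  · simp [conjExp_top]
  rw [conjExp_of_one_lt_of_ne_top h1 h2]
  simp [ENNReal.div_eq_top, (tsub_pos_of_lt h1).ne', h2]

lemma holderConjugate_toReal_conjExp {p : ℝ≥0∞} (h1 : 1 < p) (h2 : p ≠ ∞) :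
    p.toReal.HolderConjugate (conjExp p).toReal := by
  have hp1 : 1 < p.toReal := by simpa using (ENNReal.toReal_lt_toReal (by simp) h2).mpr h1
  rw [conjExp_of_one_lt_of_ne_top h1 h2, ENNReal.toReal_div,
    ENNReal.toReal_sub_of_le h1.le h2, ENNReal.toReal_one]
  exact Real.HolderConjugate.conjExponent hp1

end ConjExp

section LpENorm

variable {ι : Type*}

noncomputable def lpENorm (p : ℝ≥0∞) (a : ι → ℝ≥0∞) : ℝ≥0∞ :=
  if p = ∞ then ⨆ i, a i else (∑' i, a i ^ p.toReal) ^ (1 / p.toReal)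

lemma lpENorm_top (a : ι → ℝ≥0∞) : lpENorm ∞ a = ⨆ i, a i := by simp [lpENorm]

lemma lpENorm_of_ne_top {p : ℝ≥0∞} (hp : p ≠ ∞) (a : ι → ℝ≥0∞) :
    lpENorm p a = (∑' i, a i ^ p.toReal) ^ (1 / p.toReal) := by simp [lpENorm, hp]

lemma rpow_toReal_lpENorm {p : ℝ≥0∞} (hp : 0 < p) (hp' : p ≠ ∞) (a : ι → ℝ≥0∞) :
    lpENorm p a ^ p.toReal = ∑' i, a i ^ p.toReal := by
  rw [lpENorm_of_ne_top hp', ← ENNReal.rpow_mul, one_div,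
    inv_mul_cancel₀ (ENNReal.toReal_pos hp.ne' hp').ne', ENNReal.rpow_one]

lemma lpENorm_mono {p : ℝ≥0∞} {a b : ι → ℝ≥0∞} (h : a ≤ b) : lpENorm p a ≤ lpENorm p b := by
  rcases eq_or_ne p ∞ with rfl | hp
  · simpa only [lpENorm_top] using iSup_mono h
  rw [lpENorm_of_ne_top hp, lpENorm_of_ne_top hp]
  gcongr with i
  exact h i

lemma le_lpENorm {p : ℝ≥0∞} (hp : 0 < p) (a : ι → ℝ≥0∞) (i : ι) : a i ≤ lpENorm p a := by
  rcases eq_or_ne p ∞ with rfl | hp'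
  · rw [lpENorm_top]; exact le_iSup a i
  have hr := ENNReal.toReal_pos hp.ne' hp'
  calc a i = (a i ^ p.toReal) ^ (1 / p.toReal) := by
        rw [one_div, ENNReal.rpow_rpow_inv hr.ne']
    _ ≤ lpENorm p a := by
        rw [lpENorm_of_ne_top hp']
        gcongr
        exact ENNReal.le_tsum i

lemma lpENorm_const_mul {p : ℝ≥0∞} (hp : 0 < p) (c : ℝ≥0∞) (a : ι → ℝ≥0∞) :
    lpENorm p (fun i => c * a i) = c * lpENorm p a := by
  rcases eq_or_ne p ∞ with rfl | hp'
  · rw [lpENorm_top, lpENorm_top, ENNReal.mul_iSup]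
  have hr := ENNReal.toReal_pos hp.ne' hp'
  simp_rw [lpENorm_of_ne_top hp', ENNReal.mul_rpow_of_nonneg _ _ hr.le, ENNReal.tsum_mul_left,
    ENNReal.mul_rpow_of_nonneg _ _ (one_div_pos.mpr hr).le, ← ENNReal.rpow_mul,
    mul_one_div_cancel hr.ne', ENNReal.rpow_one]

lemma lpENorm_zero {p : ℝ≥0∞} (hp : 0 < p) : lpENorm p (0 : ι → ℝ≥0∞) = 0 := by
  rw [Pi.zero_def]
  simpa using lpENorm_const_mul hp 0 (0 : ι → ℝ≥0∞)

lemma lpENorm_pi_single [DecidableEq ι] {p : ℝ≥0∞} (hp : 0 < p) (i : ι) (v : ℝ≥0∞) :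
    lpENorm p (Pi.single i v) = v := by
  refine le_antisymm ?_ (by simpa using le_lpENorm hp (Pi.single i v) i)
  rcases eq_or_ne p ∞ with rfl | hp'
  · rw [lpENorm_top]
    refine iSup_le fun j => ?_
    rcases eq_or_ne j i with rfl | hj <;> simp [*]
  have hr := ENNReal.toReal_pos hp.ne' hp'
  have hpow : (fun j => (Pi.single i v : ι → ℝ≥0∞) j ^ p.toReal) = Pi.single i (v ^ p.toReal) := by
    ext j; rcases eq_or_ne j i with rfl | hj <;> simp [*, ENNReal.zero_rpow_of_pos hr]
  rw [lpENorm_of_ne_top hp', hpow, tsum_pi_single, one_div, ENNReal.rpow_rpow_inv hr.ne']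

lemma tsum_lt_top_of_support_finite {a : ι → ℝ≥0∞} (hfin : (support a).Finite)
    (hv : ∀ i, a i ≠ ∞) : ∑' i, a i < ∞ := by
  rw [tsum_eq_sum (s := hfin.toFinset) fun i hi => by simpa using hi]
  exact ENNReal.sum_lt_top.mpr fun i _ => (hv i).lt_top

lemma lpENorm_lt_top {p : ℝ≥0∞} (hp : 0 < p) {a : ι → ℝ≥0∞} (hfin : (support a).Finite)
    (hv : ∀ i, a i ≠ ∞) : lpENorm p a < ∞ := by
  rcases eq_or_ne p ∞ with rfl | hp'
  · rw [lpENorm_top]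
    exact (iSup_le ENNReal.le_tsum).trans_lt (tsum_lt_top_of_support_finite hfin hv)
  have hr := ENNReal.toReal_pos hp.ne' hp'
  rw [lpENorm_of_ne_top hp']
  refine ENNReal.rpow_lt_top_of_nonneg (by positivity)
    (tsum_lt_top_of_support_finite (hfin.subset fun i hi => ?_) fun i => ?_).ne
  · simpa [ENNReal.rpow_eq_zero_iff, hr, hr.not_gt] using hi
  · exact (ENNReal.rpow_lt_top_of_nonneg hr.le (hv i)).ne

end LpENorm

section Holder

variable {ι : Type*}

lemma rpow_finsetSum_le_finsetSum_rpow {r : ℝ} (hr0 : 0 < r) (hr1 : r ≤ 1) (s : Finset ι)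
    (a : ι → ℝ≥0∞) : (∑ i ∈ s, a i) ^ r ≤ ∑ i ∈ s, a i ^ r := by
  classical
  induction s using Finset.induction with
  | empty => simp [ENNReal.zero_rpow_of_pos hr0]
  | insert j t hj ih =>
    rw [Finset.sum_insert hj, Finset.sum_insert hj]
    exact (ENNReal.rpow_add_le_add_rpow _ _ hr0.le hr1).trans (by gcongr)

lemma tsum_le_lpENorm_of_le_one {p : ℝ≥0∞} (hp : 0 < p) (hp1 : p ≤ 1) (a : ι → ℝ≥0∞) :
    ∑' i, a i ≤ lpENorm p a := by
  have hp' : p ≠ ∞ := (hp1.trans_lt ENNReal.one_lt_top).ne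
  have hr := ENNReal.toReal_pos hp.ne' hp'
  have hr1 : p.toReal ≤ 1 := by simpa using ENNReal.toReal_mono ENNReal.one_ne_top hp1
  rw [lpENorm_of_ne_top hp', ENNReal.tsum_eq_iSup_sum]
  refine iSup_le fun s => ?_
  calc ∑ i ∈ s, a i = ((∑ i ∈ s, a i) ^ p.toReal) ^ (1 / p.toReal) := by
        rw [one_div, ENNReal.rpow_rpow_inv hr.ne']
    _ ≤ (∑' i, a i ^ p.toReal) ^ (1 / p.toReal) := by
        gcongr
        exact (rpow_finsetSum_le_finsetSum_rpow hr hr1 s a).trans (ENNReal.sum_le_tsum s)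

theorem tsum_mul_le_lpENorm_mul_lpENorm_conjExp {p : ℝ≥0∞} (hp : 0 < p) (a b : ι → ℝ≥0∞) :
    ∑' i, a i * b i ≤ lpENorm p a * lpENorm (conjExp p) b := by
  rcases le_or_gt p 1 with h1 | h1
  · rw [conjExp_of_le_one h1, lpENorm_top]
    calc ∑' i, a i * b i ≤ ∑' i, a i * ⨆ j, b j := by gcongr with i; exact le_iSup b i
      _ = (∑' i, a i) * ⨆ j, b j := ENNReal.tsum_mul_right
      _ ≤ _ := by gcongr; exact tsum_le_lpENorm_of_le_one hp h1 a
  rcases eq_or_ne p ∞ with rfl | h2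
  · rw [conjExp_top, lpENorm_top, lpENorm_of_ne_top ENNReal.one_ne_top]
    simp only [ENNReal.toReal_one, ENNReal.rpow_one, div_one]
    calc ∑' i, a i * b i ≤ ∑' i, (⨆ j, a j) * b i := by gcongr with i; exact le_iSup a i
      _ = _ := ENNReal.tsum_mul_left
  rw [lpENorm_of_ne_top h2, lpENorm_of_ne_top (conjExp_ne_top h1), ENNReal.tsum_eq_iSup_sum]
  refine iSup_le fun s => ?_
  refine (ENNReal.inner_le_Lp_mul_Lq s a b (holderConjugate_toReal_conjExp h1 h2)).trans ?_
  gcongr <;> exact ENNReal.sum_le_tsum s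

end Holder

section Sharpness

variable {ι : Type*}

lemma exists_eq_iSup_of_support_finite {u : ι → ℝ≥0∞} (hfin : (support u).Finite)
    (hne : (support u).Nonempty) : ∃ i, u i = ⨆ j, u j := by
  obtain ⟨i, -, hmax⟩ := Set.exists_max_image _ u hfin hne
  refine ⟨i, le_antisymm (le_iSup u i) (iSup_le fun j => ?_)⟩
  by_cases hj : u j = 0
  · simp [hj]
  · exact hmax j hj

lemma exists_tsum_mul_eq_one_of_lpENorm_conjExp_eq_one {p : ℝ≥0∞} (hp : 0 < p)
    {u : ι → ℝ≥0∞} (hfin : (support u).Finite) (hu : lpENorm (conjExp p) u = 1) :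
    ∃ w : ι → ℝ≥0∞, (support w).Finite ∧ lpENorm p w ≤ 1 ∧ ∑' i, w i * u i = 1 := by
  classical
  rcases le_or_gt p 1 with h1 | h1
  · rw [conjExp_of_le_one h1, lpENorm_top] at hu
    have hne : (support u).Nonempty := by
      rw [Set.nonempty_iff_ne_empty, Ne, support_eq_empty_iff]
      rintro rfl
      simp at hu
    obtain ⟨i₀, hi₀⟩ := exists_eq_iSup_of_support_finite hfin hne
    refine ⟨Pi.single i₀ 1, (Set.finite_singleton i₀).subset ?_, (lpENorm_pi_single hp _ _).le, ?_⟩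
    · exact fun i hi => by by_contra h; simp [h] at hi
    · simp_rw [Pi.single_apply, ite_mul, one_mul, zero_mul]
      rw [tsum_ite_eq, hi₀, hu]
  rcases eq_or_ne p ∞ with rfl | h2
  · rw [conjExp_top, lpENorm_of_ne_top ENNReal.one_ne_top] at hu
    simp only [ENNReal.toReal_one, ENNReal.rpow_one, div_one] at hu
    refine ⟨(support u).indicator 1, hfin.subset Set.support_indicator_subset, ?_, ?_⟩
    · rw [lpENorm_top]
      exact iSup_le fun i => Set.indicator_le_self' (by simp) i
    · rw [← hu]
      refine tsum_congr fun i => ?_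
      by_cases hi : u i = 0 <;> simp [hi]
  have hc := (holderConjugate_toReal_conjExp h1 h2).symm
  set r' := (conjExp p).toReal
  have hsum : ∑' i, u i ^ r' = 1 := by
    rw [← rpow_toReal_lpENorm (conjExp_pos p) (conjExp_ne_top h1), hu, ENNReal.one_rpow]
  have hpow (i : ι) : u i ^ (r' - 1) * u i = u i ^ r' := by
    simpa using (ENNReal.rpow_add_of_nonneg (x := u i) _ _ hc.sub_one_pos.le zero_le_one).symm
  refine ⟨fun i => u i ^ (r' - 1), hfin.subset fun i hi => ?_, ?_, by simp_rw [hpow, hsum]⟩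
  · contrapose! hi
    simp [show u i = 0 by simpa using hi, ENNReal.zero_rpow_of_pos hc.sub_one_pos]
  · simp_rw [lpENorm_of_ne_top h2, ← ENNReal.rpow_mul, hc.sub_one_mul_conj, hsum,
      ENNReal.one_rpow, le_refl]

lemma exists_tsum_mul_eq_lpENorm_conjExp {p : ℝ≥0∞} (hp : 0 < p) {u : ι → ℝ≥0∞}
    (hfin : (support u).Finite) (hv : ∀ i, u i ≠ ∞) :
    ∃ w : ι → ℝ≥0∞, (support w).Finite ∧ lpENorm p w ≤ 1 ∧
      ∑' i, w i * u i = lpENorm (conjExp p) u := by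
  set B := lpENorm (conjExp p) u
  have hB : B ≠ ∞ := (lpENorm_lt_top (conjExp_pos p) hfin hv).ne
  rcases eq_or_ne B 0 with hB0 | hB0
  · exact ⟨0, by simp, by simp [lpENorm_zero hp], by simp [hB0]⟩
  have hnorm : lpENorm (conjExp p) (fun i => B⁻¹ * u i) = 1 := by
    rw [lpENorm_const_mul (conjExp_pos p), ENNReal.inv_mul_cancel hB0 hB]
  obtain ⟨w, hwfin, hw1, hwu⟩ := exists_tsum_mul_eq_one_of_lpENorm_conjExp_eq_one hp
    (hfin.subset fun i hi => right_ne_zero_of_mul hi) hnorm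
  refine ⟨w, hwfin, hw1, ?_⟩
  calc ∑' i, w i * u i = B * ∑' i, w i * (B⁻¹ * u i) := by
        rw [← ENNReal.tsum_mul_left]
        refine tsum_congr fun i => ?_
        rw [mul_left_comm, ENNReal.mul_inv_cancel_left hB0 hB]
    _ = B := by rw [hwu, mul_one]

lemma exists_finset_lt_lpENorm_indicator {p : ℝ≥0∞} (hp : 0 < p) {a : ι → ℝ≥0∞} {c : ℝ≥0∞}
    (hc : c < lpENorm p a) : ∃ t : Finset ι, c < lpENorm p ((t : Set ι).indicator a) := by
  classical
  rcases eq_or_ne p ∞ with rfl | hp'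
  · obtain ⟨i, hi⟩ := lt_iSup_iff.mp (lpENorm_top a ▸ hc)
    refine ⟨{i}, hi.trans_le ?_⟩
    simpa using le_lpENorm ENNReal.zero_lt_top (({i} : Set ι).indicator a) i
  have hr := ENNReal.toReal_pos hp.ne' hp'
  rw [← ENNReal.rpow_lt_rpow_iff hr, rpow_toReal_lpENorm hp hp', ENNReal.tsum_eq_iSup_sum] at hc
  obtain ⟨t, ht⟩ := lt_iSup_iff.mp hc
  refine ⟨t, (ENNReal.rpow_lt_rpow_iff hr).mp ?_⟩
  have hpow : (fun i => (t : Set ι).indicator a i ^ p.toReal)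
      = (t : Set ι).indicator fun i => a i ^ p.toReal := by
    ext i; by_cases hi : i ∈ t <;> simp [hi, ENNReal.zero_rpow_of_pos hr]
  rwa [rpow_toReal_lpENorm hp hp', hpow, ← sum_eq_tsum_indicator]

lemma exists_le_finite_lt_lpENorm {p : ℝ≥0∞} (hp : 0 < p) {a : ι → ℝ≥0∞} {c : ℝ≥0∞}
    (hc : c < lpENorm p a) :
    ∃ a' : ι → ℝ≥0∞, a' ≤ a ∧ (support a').Finite ∧ (∀ i, a' i ≠ ∞) ∧ c < lpENorm p a' := by
  classical
  by_cases htop : ∀ i, a i ≠ ∞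
  · obtain ⟨t, ht⟩ := exists_finset_lt_lpENorm_indicator hp hc
    refine ⟨(t : Set ι).indicator a, Set.indicator_le_self _ _,
      t.finite_toSet.subset Set.support_indicator_subset, fun i => ?_, ht⟩
    by_cases hi : i ∈ t <;> simp [hi, htop]
  · obtain ⟨i, hi⟩ : ∃ i, a i = ∞ := by simpa using htop
    have hc' : c + 1 ≠ ∞ := ENNReal.add_ne_top.mpr ⟨hc.ne_top, ENNReal.one_ne_top⟩
    refine ⟨Pi.single i (c + 1), fun j => ?_, (Set.finite_singleton i).subset fun j hj => ?_,
      fun j => ?_, ?_⟩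
    · rcases eq_or_ne j i with rfl | hj <;> simp [*]
    · by_contra h; simp [h] at hj
    · rcases eq_or_ne j i with rfl | hj <;> simp [*]
    · rw [lpENorm_pi_single hp]
      exact ENNReal.lt_add_right hc.ne_top one_ne_zero

theorem exists_lpENorm_le_one_lt_tsum_mul {p : ℝ≥0∞} (hp : 0 < p) {b : ι → ℝ≥0∞} {c : ℝ≥0∞}
    (hc : c < lpENorm (conjExp p) b) :
    ∃ a : ι → ℝ≥0∞, (support a).Finite ∧ lpENorm p a ≤ 1 ∧ c < ∑' i, a i * b i := by
  obtain ⟨b', hb'b, hb'fin, hb'v, hcb'⟩ := exists_le_finite_lt_lpENorm (conjExp_pos p) hc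
  obtain ⟨a, hafin, ha1, hab'⟩ := exists_tsum_mul_eq_lpENorm_conjExp hp hb'fin hb'v
  refine ⟨a, hafin, ha1, hcb'.trans_le ?_⟩
  rw [← hab']
  gcongr with i
  exact hb'b i

end Sharpness

section Mixed

variable {J K : Type*}

noncomputable def mixedLpENorm (p q : ℝ≥0∞) (a : J × K → ℝ≥0∞) : ℝ≥0∞ :=
  lpENorm q fun k => lpENorm p fun j => a (j, k)

lemma ellpqNorm_eq_mixedLpENorm (p q : ℝ≥0∞) (f : J × K → ℂ) :
    ellpqNorm p q f = mixedLpENorm p q (fun x => (‖f x‖₊ : ℝ≥0∞)) := rfl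

lemma mixedLpENorm_mono {p q : ℝ≥0∞} {a b : J × K → ℝ≥0∞} (h : a ≤ b) :
    mixedLpENorm p q a ≤ mixedLpENorm p q b :=
  lpENorm_mono fun k => lpENorm_mono fun j => h (j, k)

lemma mixedLpENorm_zero {p q : ℝ≥0∞} (hp : 0 < p) (hq : 0 < q) :
    mixedLpENorm p q (0 : J × K → ℝ≥0∞) = 0 := by
  change lpENorm q (fun _ => lpENorm p (0 : J → ℝ≥0∞)) = 0
  rw [lpENorm_zero hp]
  exact lpENorm_zero hq

lemma le_mixedLpENorm {p q : ℝ≥0∞} (hp : 0 < p) (hq : 0 < q) (a : J × K → ℝ≥0∞) (x : J × K) :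
    a x ≤ mixedLpENorm p q a :=
  (le_lpENorm hp (fun j => a (j, x.2)) x.1).trans (le_lpENorm hq _ x.2)

lemma mixedLpENorm_lt_top {p q : ℝ≥0∞} (hp : 0 < p) (hq : 0 < q) {a : J × K → ℝ≥0∞}
    (hfin : (support a).Finite) (hv : ∀ x, a x ≠ ∞) : mixedLpENorm p q a < ∞ := by
  refine lpENorm_lt_top hq ((hfin.image Prod.snd).subset fun k hk => ?_) fun k =>
    (lpENorm_lt_top hp ((hfin.image Prod.fst).subset fun j hj => ⟨(j, k), hj, rfl⟩)
      fun _ => hv _).ne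
  by_contra hk'
  have hcol : (fun j => a (j, k)) = 0 := funext fun j => by
    by_contra hj
    exact hk' ⟨(j, k), hj, rfl⟩
  exact hk (by simp only [hcol, lpENorm_zero hp])

theorem tsum_mul_le_mixedLpENorm_mul_mixedLpENorm_conjExp {p q : ℝ≥0∞} (hp : 0 < p)
    (hq : 0 < q) (a b : J × K → ℝ≥0∞) :
    ∑' x, a x * b x ≤ mixedLpENorm p q a * mixedLpENorm (conjExp p) (conjExp q) b :=
  calc ∑' x, a x * b x = ∑' k, ∑' j, a (j, k) * b (j, k) :=
        ENNReal.tsum_prod'.trans ENNReal.tsum_comm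
    _ ≤ ∑' k, lpENorm p (fun j => a (j, k)) * lpENorm (conjExp p) (fun j => b (j, k)) :=
        ENNReal.tsum_le_tsum fun _ => tsum_mul_le_lpENorm_mul_lpENorm_conjExp hp _ _
    _ ≤ _ := tsum_mul_le_lpENorm_mul_lpENorm_conjExp hq _ _

lemma mixedLpENorm_mul_le_lpENorm {p q : ℝ≥0∞} (hp : 0 < p) (w : K → ℝ≥0∞)
    {A : K → J → ℝ≥0∞} (hA : ∀ k, lpENorm p (A k) ≤ 1) :
    mixedLpENorm p q (fun x => w x.2 * A x.2 x.1) ≤ lpENorm q w :=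
  lpENorm_mono fun k => (lpENorm_const_mul hp (w k) (A k)).trans_le (mul_le_of_le_one_right' (hA k))

theorem exists_mixedLpENorm_le_one_lt_tsum_mul {p q : ℝ≥0∞} (hp : 0 < p) (hq : 0 < q)
    {b : J × K → ℝ≥0∞} {c : ℝ≥0∞} (hc : c < mixedLpENorm (conjExp p) (conjExp q) b) :
    ∃ a : J × K → ℝ≥0∞, (support a).Finite ∧ mixedLpENorm p q a ≤ 1 ∧
      c < ∑' x, a x * b x := by
  set B : K → ℝ≥0∞ := fun k => lpENorm (conjExp p) fun j => b (j, k)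
  obtain ⟨B', hB'B, hB'fin, hB'v, hcB'⟩ := exists_le_finite_lt_lpENorm (conjExp_pos q) hc
  obtain ⟨w, hwfin, hw1, hwB'⟩ := exists_tsum_mul_eq_lpENorm_conjExp hq hB'fin hB'v
  set E := lpENorm (conjExp q) B'
  have hE : E ≠ ∞ := (lpENorm_lt_top (conjExp_pos q) hB'fin hB'v).ne
  -- leave room `θ < 1` so that each column only has to be approximated up to `θ B' k < B k`
  obtain ⟨θ, hθ1, hcθ⟩ : ∃ θ < 1, c < θ * E := by
    obtain ⟨θ, hθc, hθ1⟩ := exists_between (ENNReal.div_lt_of_lt_mul (by rwa [one_mul]))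
    exact ⟨θ, hθ1, (ENNReal.div_lt_iff (Or.inl (pos_of_gt hcB').ne') (Or.inl hE)).mp hθc⟩
  have hcol (k : K) : ∃ a : J → ℝ≥0∞, (support a).Finite ∧ lpENorm p a ≤ 1 ∧
      θ * B' k ≤ ∑' j, a j * b (j, k) := by
    rcases eq_or_ne (B' k) 0 with h0 | h0
    · exact ⟨0, by simp, by simp [lpENorm_zero hp], by simp [h0]⟩
    have hθB' : θ * B' k < B k := calc
      θ * B' k < 1 * B' k := ENNReal.mul_lt_mul_left h0 (hB'v k) hθ1
      _ ≤ B k := (one_mul (B' k)).trans_le (hB'B k)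
    obtain ⟨a, ha⟩ := exists_lpENorm_le_one_lt_tsum_mul hp hθB'
    exact ⟨a, ha.1, ha.2.1, ha.2.2.le⟩
  choose A hAfin hA1 hAb using hcol
  refine ⟨fun x => w x.2 * A x.2 x.1, ?_, ?_, ?_⟩
  · refine (((hwfin.biUnion fun k _ => hAfin k)).prod hwfin).subset fun x hx => ?_
    exact ⟨Set.mem_biUnion (left_ne_zero_of_mul hx) (right_ne_zero_of_mul hx),
      left_ne_zero_of_mul hx⟩
  · exact (mixedLpENorm_mul_le_lpENorm hp w hA1).trans hw1
  calc c < θ * E := hcθ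
    _ = ∑' k, w k * (θ * B' k) := by
        rw [← hwB', ← ENNReal.tsum_mul_left]
        exact tsum_congr fun k => mul_left_comm _ _ _
    _ ≤ ∑' k, ∑' j, w k * A k j * b (j, k) := by
        gcongr with k
        simp_rw [mul_assoc, ENNReal.tsum_mul_left]
        gcongr
        exact hAb k
    _ = ∑' x : J × K, w x.2 * A x.2 x.1 * b x := by rw [ENNReal.tsum_prod', ENNReal.tsum_comm]

end Mixed

section Pairing

variable {J K : Type*} {p q : ℝ≥0∞}

lemma ellpqNorm_zero (hp : 0 < p) (hq : 0 < q) : ellpqNorm p q (0 : J × K → ℂ) = 0 := by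
  rw [ellpqNorm_eq_mixedLpENorm, ← mixedLpENorm_zero hp hq]
  congr with x
  simp

lemma memEllpq0_of_finite (hp : 0 < p) (hq : 0 < q) {f : J × K → ℂ}
    (hf : (support f).Finite) : memEllpq0 p q f := by
  refine ⟨?_, fun ε hε => ⟨f, hf, ?_⟩⟩
  · rw [ellpqNorm_eq_mixedLpENorm]
    exact mixedLpENorm_lt_top hp hq (hf.subset fun x hx => by simpa using hx)
      fun _ => ENNReal.coe_ne_top
  rw [sub_self, ellpqNorm_zero hp hq]
  exact ENNReal.ofReal_pos.mpr hε

lemma memEllpq0.sub_of_finite {f g : J × K → ℂ} (hf : memEllpq0 p q f) (hg : (support g).Finite)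
    (hfg : ellpqNorm p q (f - g) < ⊤) : memEllpq0 p q (f - g) := by
  refine ⟨hfg, fun ε hε => ?_⟩
  obtain ⟨g', hg', hfg'⟩ := hf.2 ε hε
  refine ⟨g' - g, (hg'.union hg).subset (support_sub _ _), ?_⟩
  rwa [sub_sub_sub_cancel_right]

lemma tsum_nnnorm_mul_le (hp : 0 < p) (hq : 0 < q) (f μ : J × K → ℂ) :
    ∑' x, (‖f x * μ x‖₊ : ℝ≥0∞) ≤ ellpqNorm p q f * ellpqNorm (conjExp p) (conjExp q) μ := by
  simp only [nnnorm_mul, ENNReal.coe_mul]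
  exact tsum_mul_le_mixedLpENorm_mul_mixedLpENorm_conjExp hp hq _ _

lemma summable_mul_of_ellpqNorm_lt_top (hp : 0 < p) (hq : 0 < q) {f μ : J × K → ℂ}
    (hf : ellpqNorm p q f < ⊤) (hμ : ellpqNorm (conjExp p) (conjExp q) μ < ⊤) :
    Summable fun x => f x * μ x := by
  refine Summable.of_nnnorm (ENNReal.tsum_coe_ne_top_iff_summable.mp ?_)
  exact ((tsum_nnnorm_mul_le hp hq f μ).trans_lt (ENNReal.mul_lt_top hf hμ)).ne

lemma ofReal_norm_tsum_mul_le (hp : 0 < p) (hq : 0 < q) (f μ : J × K → ℂ) :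
    ENNReal.ofReal ‖∑' x, f x * μ x‖ ≤ ellpqNorm p q f * ellpqNorm (conjExp p) (conjExp q) μ := by
  rw [ofReal_norm]
  exact enorm_tsum_le_tsum_enorm.trans (tsum_nnnorm_mul_le hp hq f μ)

/-- Multiplying `a` by the conjugate phase of `μ` turns the pairing with `μ` into `∑ a ‖μ‖`. -/
lemma exists_ofReal_norm_tsum_mul_eq {ι : Type*} {a : ι → ℝ≥0∞} (hfin : (support a).Finite)
    (hv : ∀ i, a i ≠ ∞) (μ : ι → ℂ) :
    ∃ f : ι → ℂ, support f ⊆ support a ∧ (∀ i, (‖f i‖₊ : ℝ≥0∞) ≤ a i) ∧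
      ENNReal.ofReal ‖∑' i, f i * μ i‖ = ∑' i, a i * ‖μ i‖₊ := by
  set f : ι → ℂ := fun i => (a i).toReal * (starRingEnd ℂ (μ i) / ‖μ i‖)
  have hsupp : support f ⊆ support a := fun i hi => by
    contrapose! hi
    simp [f, show a i = 0 by simpa using hi]
  have hfμ (i : ι) : f i * μ i = ((a i).toReal * ‖μ i‖ : ℝ) := by
    rw [mul_assoc, div_mul_eq_mul_div, Complex.conj_mul', sq, mul_self_div_self, Complex.ofReal_mul]
  refine ⟨f, hsupp, fun i => ?_, ?_⟩
  · rw [← enorm_eq_nnnorm, ← ofReal_norm, ← ENNReal.ofReal_toReal (hv i)]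
    refine ENNReal.ofReal_le_ofReal ?_
    rw [norm_mul, norm_div, Complex.norm_conj, Complex.norm_real, Complex.norm_real, norm_norm,
      Real.norm_of_nonneg ENNReal.toReal_nonneg]
    exact mul_le_of_le_one_right ENNReal.toReal_nonneg (div_self_le_one _)
  have hout (i : ι) (hi : i ∉ hfin.toFinset) : a i = 0 := by simpa using hi
  rw [tsum_eq_sum (s := hfin.toFinset) fun i hi => by rw [hfμ, hout i hi]; simp,
    tsum_eq_sum (s := hfin.toFinset) fun i hi => by rw [hout i hi, zero_mul]]
  simp_rw [hfμ, ← Complex.ofReal_sum, Complex.norm_real, Real.norm_eq_abs]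
  have hnn (i : ι) : 0 ≤ (a i).toReal * ‖μ i‖ := by positivity
  rw [abs_of_nonneg (Finset.sum_nonneg fun i _ => hnn i),
    ENNReal.ofReal_sum_of_nonneg fun i _ => hnn i]
  refine Finset.sum_congr rfl fun i _ => ?_
  rw [ENNReal.ofReal_mul ENNReal.toReal_nonneg, ENNReal.ofReal_toReal (hv i), ofReal_norm,
    enorm_eq_nnnorm]

theorem exists_ellpqNorm_le_one_lt_norm_tsum_mul (hp : 0 < p) (hq : 0 < q) (μ : J × K → ℂ)
    {c : ℝ≥0∞} (hc : c < ellpqNorm (conjExp p) (conjExp q) μ) :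
    ∃ f : J × K → ℂ, (support f).Finite ∧ ellpqNorm p q f ≤ 1 ∧
      c < ENNReal.ofReal ‖∑' x, f x * μ x‖ := by
  obtain ⟨a, hafin, ha1, hca⟩ :=
    exists_mixedLpENorm_le_one_lt_tsum_mul (b := fun x => (‖μ x‖₊ : ℝ≥0∞)) hp hq hc
  have hv (x : J × K) : a x ≠ ∞ :=
    ((le_mixedLpENorm hp hq a x).trans_lt (ha1.trans_lt ENNReal.one_lt_top)).ne
  obtain ⟨f, hfa, hf, hfμ⟩ := exists_ofReal_norm_tsum_mul_eq hafin hv μ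
  exact ⟨f, hafin.subset hfa, (mixedLpENorm_mono hf).trans ha1, hfμ ▸ hca⟩

end Pairing

section Duality

variable {J K : Type*} {p q : ℝ≥0∞}

lemma ellpqNorm_conjExp_le_of_norm_tsum_mul_le (hp : 0 < p) (hq : 0 < q) {μ : J × K → ℂ}
    {C : ℝ≥0∞} (h : ∀ f : J × K → ℂ, (support f).Finite → ellpqNorm p q f ≤ 1 →
      ENNReal.ofReal ‖∑' x, f x * μ x‖ ≤ C) :
    ellpqNorm (conjExp p) (conjExp q) μ ≤ C := by
  refine le_of_forall_lt fun c hc => ?_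
  obtain ⟨f, hf, hf1, hcf⟩ := exists_ellpqNorm_le_one_lt_norm_tsum_mul hp hq μ hc
  exact hcf.trans_le (h f hf hf1)

theorem iSup_ofReal_norm_tsum_mul_eq (hp : 0 < p) (hq : 0 < q) (μ : J × K → ℂ) :
    ⨆ (f : J × K → ℂ) (_ : memEllpq0 p q f ∧ ellpqNorm p q f ≤ 1),
        ENNReal.ofReal ‖∑' x, f x * μ x‖ = ellpqNorm (conjExp p) (conjExp q) μ := by
  refine le_antisymm (iSup₂_le fun f hf => ?_) ?_
  · calc ENNReal.ofReal ‖∑' x, f x * μ x‖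
        ≤ ellpqNorm p q f * ellpqNorm (conjExp p) (conjExp q) μ :=
          ofReal_norm_tsum_mul_le hp hq f μ
      _ ≤ ellpqNorm (conjExp p) (conjExp q) μ := mul_le_of_le_one_left' hf.2
  · refine ellpqNorm_conjExp_le_of_norm_tsum_mul_le hp hq fun f hf hf1 => ?_
    exact le_iSup₂_of_le (f := fun f (_ : memEllpq0 p q f ∧ ellpqNorm p q f ≤ 1) =>
      ENNReal.ofReal ‖∑' x, f x * μ x‖) f ⟨memEllpq0_of_finite hp hq hf, hf1⟩ le_rfl

end Duality

section Functional

variable {J K : Type*} {p q : ℝ≥0∞}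

lemma map_eq_tsum_mul_of_finite [DecidableEq (J × K)] (hp : 0 < p) (hq : 0 < q)
    {L : (J × K → ℂ) → ℂ}
    (hadd : ∀ f g, memEllpq0 p q f → memEllpq0 p q g → L (f + g) = L f + L g)
    (hsmul : ∀ (c : ℂ) f, memEllpq0 p q f → L (c • f) = c * L f)
    {g : J × K → ℂ} (hg : (support g).Finite) :
    L g = ∑' x, g x * L (Pi.single x 1) := by
  have hmem (s : Finset (J × K)) (f : J × K → ℂ) (hf : support f ⊆ s) : memEllpq0 p q f :=
    memEllpq0_of_finite hp hq (s.finite_toSet.subset hf)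
  have hsum (s : Finset (J × K)) :
      L (∑ x ∈ s, g x • Pi.single x 1) = ∑ x ∈ s, g x * L (Pi.single x 1) := by
    induction s using Finset.induction with
    | empty => simpa using hsmul 0 0 (hmem ∅ 0 (by simp))
    | insert x s hx ih =>
      have hsingle : support (g x • Pi.single x 1 : J × K → ℂ) ⊆ ({x} : Finset (J × K)) :=
        (support_smul_subset_right _ _).trans (by simp)
      have hrest : support (∑ y ∈ s, g y • Pi.single y 1 : J × K → ℂ) ⊆ s := by
        intro z hz
        contrapose! hz
        simp_all [Finset.sum_apply, Pi.single_apply]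
      rw [Finset.sum_insert hx, Finset.sum_insert hx, hadd _ _ (hmem _ _ hsingle) (hmem _ _ hrest),
        hsmul _ _ (hmem {x} _ (by simp)), ih]
  have hdecomp : g = ∑ x ∈ hg.toFinset, g x • Pi.single x 1 := by
    ext z
    by_cases hz : g z = 0 <;> simp [Finset.sum_apply, Pi.single_apply, hz]
  calc L g = L (∑ x ∈ hg.toFinset, g x • Pi.single x 1) := congrArg L hdecomp
    _ = ∑ x ∈ hg.toFinset, g x * L (Pi.single x 1) := hsum _
    _ = ∑' x, g x * L (Pi.single x 1) :=
        (tsum_eq_sum fun x hx => by rw [show g x = 0 by simpa using hx, zero_mul]).symm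

/-- No triangle inequality for the quasi-norm is needed: `f = (f - g) + g` with `g` a finitely
supported approximant of `f`. -/
lemma memEllpq0.map_eq_zero (hp : 0 < p) (hq : 0 < q) {D : (J × K → ℂ) → ℂ} {C : ℝ} (hC : 0 ≤ C)
    (hadd : ∀ f g, memEllpq0 p q f → memEllpq0 p q g → D (f + g) = D f + D g)
    (hbound : ∀ f, memEllpq0 p q f → ‖D f‖ ≤ C * (ellpqNorm p q f).toReal)
    (hfin : ∀ g : J × K → ℂ, (support g).Finite → D g = 0)
    {f : J × K → ℂ} (hf : memEllpq0 p q f) : D f = 0 := by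
  refine norm_le_zero_iff.mp (le_of_forall_pos_le_add fun ε hε => ?_)
  obtain ⟨g, hg, hfg⟩ := hf.2 (ε / (C + 1)) (by positivity)
  have hfg' : memEllpq0 p q (f - g) := hf.sub_of_finite hg (hfg.trans ENNReal.ofReal_lt_top)
  have hDf : D f = D (f - g) := by
    simpa [hfin g hg] using hadd (f - g) g hfg' (memEllpq0_of_finite hp hq hg)
  calc ‖D f‖ = ‖D (f - g)‖ := by rw [hDf]
    _ ≤ C * (ellpqNorm p q (f - g)).toReal := hbound _ hfg'
    _ ≤ C * (ε / (C + 1)) := by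
        gcongr
        exact ENNReal.toReal_le_of_le_ofReal (by positivity) hfg.le
    _ ≤ 0 + ε := by
        rw [zero_add, ← mul_div_assoc, div_le_iff₀ (by positivity)]
        nlinarith

lemma norm_tsum_mul_le (hp : 0 < p) (hq : 0 < q) {f μ : J × K → ℂ} (hf : ellpqNorm p q f < ⊤)
    (hμ : ellpqNorm (conjExp p) (conjExp q) μ < ⊤) :
    ‖∑' x, f x * μ x‖ ≤
      (ellpqNorm p q f).toReal * (ellpqNorm (conjExp p) (conjExp q) μ).toReal := by
  rw [← ENNReal.toReal_mul, ← ENNReal.toReal_ofReal (norm_nonneg _)]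
  exact ENNReal.toReal_mono (ENNReal.mul_lt_top hf hμ).ne (ofReal_norm_tsum_mul_le hp hq f μ)

lemma map_eq_tsum_mul_of_memEllpq0 (hp : 0 < p) (hq : 0 < q) {L : (J × K → ℂ) → ℂ}
    (hadd : ∀ f g, memEllpq0 p q f → memEllpq0 p q g → L (f + g) = L f + L g)
    {C : ℝ} (hC0 : 0 ≤ C) (hC : ∀ f, memEllpq0 p q f → ‖L f‖ ≤ C * (ellpqNorm p q f).toReal)
    {μ : J × K → ℂ} (hμ : ellpqNorm (conjExp p) (conjExp q) μ < ⊤)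
    (hfin : ∀ g : J × K → ℂ, (support g).Finite → L g = ∑' x, g x * μ x)
    {f : J × K → ℂ} (hf : memEllpq0 p q f) : L f = ∑' x, f x * μ x := by
  set M := (ellpqNorm (conjExp p) (conjExp q) μ).toReal
  refine sub_eq_zero.mp (hf.map_eq_zero hp hq (D := fun f => L f - ∑' x, f x * μ x)
    (C := C + M) (by positivity) (fun f g hf hg => ?_) (fun f hf => ?_)
    fun g hg => sub_eq_zero.mpr (hfin g hg))
  · simp only [hadd f g hf hg, Pi.add_apply, add_mul,
      (summable_mul_of_ellpqNorm_lt_top hp hq hf.1 hμ).tsum_add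
        (summable_mul_of_ellpqNorm_lt_top hp hq hg.1 hμ)]
    ring
  · calc ‖L f - ∑' x, f x * μ x‖ ≤ ‖L f‖ + ‖∑' x, f x * μ x‖ := norm_sub_le _ _
      _ ≤ C * (ellpqNorm p q f).toReal + (ellpqNorm p q f).toReal * M :=
          add_le_add (hC f hf) (norm_tsum_mul_le hp hq hf.1 hμ)
      _ = (C + M) * (ellpqNorm p q f).toReal := by ring

lemma ellpqNorm_conjExp_le_of_map_eq_tsum_mul (hp : 0 < p) (hq : 0 < q) {L : (J × K → ℂ) → ℂ}
    {C : ℝ} (hC0 : 0 ≤ C) (hC : ∀ f, memEllpq0 p q f → ‖L f‖ ≤ C * (ellpqNorm p q f).toReal)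
    {μ : J × K → ℂ} (hfin : ∀ g : J × K → ℂ, (support g).Finite → L g = ∑' x, g x * μ x) :
    ellpqNorm (conjExp p) (conjExp q) μ ≤ ENNReal.ofReal C := by
  refine ellpqNorm_conjExp_le_of_norm_tsum_mul_le hp hq fun f hf hf1 => ?_
  have hf1' : (ellpqNorm p q f).toReal ≤ 1 :=
    ENNReal.toReal_le_of_le_ofReal zero_le_one (by rwa [ENNReal.ofReal_one])
  rw [← hfin f hf]
  exact ENNReal.ofReal_le_ofReal <|
    (hC f (memEllpq0_of_finite hp hq hf)).trans (mul_le_of_le_one_right hC0 hf1')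

end Functional

/-- The pairing `(λ,μ) ↦ Σ λ_{jk} μ_{jk}` identifies
`ℓ^{p',q'}(J,K)` isometrically with the dual of `ℓ^{p,q}_0(J,K)`. -/
theorem stmt_14 {J K : Type*} (p q : ℝ≥0∞) (hp : 0 < p) (hq : 0 < q) :
    (∀ μ : J × K → ℂ, ellpqNorm (conjExp p) (conjExp q) μ < ⊤ →
      (∀ f : J × K → ℂ, memEllpq0 p q f →
        Summable (fun jk : J × K => f jk * μ jk)) ∧
      (⨆ (f : J × K → ℂ) (_ : memEllpq0 p q f ∧ ellpqNorm p q f ≤ 1),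
          ENNReal.ofReal ‖∑' jk : J × K, f jk * μ jk‖)
        = ellpqNorm (conjExp p) (conjExp q) μ) ∧
    (∀ L : (J × K → ℂ) → ℂ,
      (∀ f g : J × K → ℂ, memEllpq0 p q f → memEllpq0 p q g →
        L (f + g) = L f + L g) →
      (∀ (c : ℂ) (f : J × K → ℂ), memEllpq0 p q f → L (c • f) = c * L f) →
      (∃ Cb : ℝ, 0 ≤ Cb ∧ ∀ f : J × K → ℂ, memEllpq0 p q f →
        ‖L f‖ ≤ Cb * (ellpqNorm p q f).toReal) →
      ∃! μ : J × K → ℂ,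
        ellpqNorm (conjExp p) (conjExp q) μ < ⊤ ∧
        (∀ f : J × K → ℂ, memEllpq0 p q f → L f = ∑' jk : J × K, f jk * μ jk) ∧
        (⨆ (f : J × K → ℂ) (_ : memEllpq0 p q f ∧ ellpqNorm p q f ≤ 1),
            ENNReal.ofReal ‖L f‖)
          = ellpqNorm (conjExp p) (conjExp q) μ) := by
  classical
  refine ⟨fun μ hμ => ⟨fun f hf => summable_mul_of_ellpqNorm_lt_top hp hq hf.1 hμ,
    iSup_ofReal_norm_tsum_mul_eq hp hq μ⟩, ?_⟩
  rintro L hadd hsmul ⟨C, hC0, hC⟩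
  set μ : J × K → ℂ := fun x => L (Pi.single x 1)
  have hfin (g : J × K → ℂ) (hg : (support g).Finite) : L g = ∑' x, g x * μ x :=
    map_eq_tsum_mul_of_finite hp hq hadd hsmul hg
  have hμ : ellpqNorm (conjExp p) (conjExp q) μ < ⊤ :=
    (ellpqNorm_conjExp_le_of_map_eq_tsum_mul hp hq hC0 hC hfin).trans_lt ENNReal.ofReal_lt_top
  have hrep (f : J × K → ℂ) (hf : memEllpq0 p q f) : L f = ∑' x, f x * μ x :=
    map_eq_tsum_mul_of_memEllpq0 hp hq hadd hC0 hC hμ hfin hf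
  refine ⟨μ, ⟨hμ, hrep, ?_⟩, fun ν ⟨_, hν, _⟩ => funext fun x => ?_⟩
  · rw [← iSup_ofReal_norm_tsum_mul_eq hp hq μ]
    exact iSup_congr fun f => iSup_congr fun hf => by rw [hrep f hf.1]
  · have hx := hν (Pi.single x 1)
      (memEllpq0_of_finite hp hq ((Set.finite_singleton x).subset Pi.support_single_subset))
    rwa [tsum_eq_single x fun y hy => by simp [hy], Pi.single_eq_same, one_mul, eq_comm] at hx
end

section
/- Let h > 0 and s, s' ∈ ℝ. The function h' ↦ (h+h')^s · h'^{s'} is bounded on (0,∞) if and only if s' ≥ 0 and s + s' ≤ 0; in that case, sup_{h' > 0} (h+h')^s h'^{s'} = (s'^{s'} · (−s−s')^{−s−s'} / (−s)^{−s}) · h^{s+s'}, with the convention 0^0 = 1. Moreover, the function h' ↦ (h+h')^s h'^{s'} tends to 0 as h' → 0⁺ and as h' → ∞ if and only if s' > 0 and s + s' < 0. -/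
/-!
Write `f x = (h + x) ^ s * x ^ s'`. As `x → 0⁺`, `f x ∼ h ^ s * x ^ s'`, and as `x → ∞`,
`f x ∼ x ^ (s + s')`; these two asymptotic equivalences decide boundedness and both limits.
For the supremum, weighted AM-GM with weights `p = -s - s'` and `q = s'` applied to `h` and `x`
gives `h ^ p * x ^ q * (p + q) ^ (p + q) ≤ p ^ p * q ^ q * (h + x) ^ (p + q)`, with equality at
`x = q * h / p` when `p, q > 0`. When `q = 0` (resp. `p = 0`) the bound is only approached,
as `x → 0⁺` (resp. `x → ∞`).
-/

open Set Filter Topology Asymptotics Real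

lemma rpow_self_pos {x : ℝ} (hx : 0 ≤ x) : 0 < x ^ x := by
  rcases hx.eq_or_lt with rfl | hx
  · simp
  · positivity

lemma rpow_div_mul_rpow_div_le {p q u v : ℝ} (hp : 0 ≤ p) (hq : 0 ≤ q) (hu : 0 ≤ u)
    (hv : 0 ≤ v) : (u / p) ^ p * (v / q) ^ q ≤ ((u + v) / (p + q)) ^ (p + q) := by
  rcases hp.eq_or_lt with rfl | hp
  · rw [rpow_zero, one_mul, zero_add]
    gcongr
    linarith
  rcases hq.eq_or_lt with rfl | hq
  · rw [rpow_zero, mul_one, add_zero]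
    gcongr
    linarith
  have hpq : 0 < p + q := by linarith
  have amgm := geom_mean_le_arith_mean2_weighted (div_nonneg hp.le hpq.le)
    (div_nonneg hq.le hpq.le) (div_nonneg hu hp.le) (div_nonneg hv hq.le)
    (by field_simp : p / (p + q) + q / (p + q) = 1)
  have hmean : p / (p + q) * (u / p) + q / (p + q) * (v / q) = (u + v) / (p + q) := by
    field_simp
  rw [hmean] at amgm
  have := rpow_le_rpow (by positivity) amgm hpq.le
  rwa [mul_rpow (by positivity) (by positivity), ← rpow_mul (by positivity),
    ← rpow_mul (by positivity), div_mul_cancel₀ _ hpq.ne', div_mul_cancel₀ _ hpq.ne'] at this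

lemma add_rpow_mul_rpow_le {h x s s' : ℝ} (hh : 0 < h) (hx : 0 ≤ x) (hs' : 0 ≤ s')
    (hss : s + s' ≤ 0) :
    (h + x) ^ s * x ^ s' ≤ s' ^ s' * (-s - s') ^ (-s - s') / (-s) ^ (-s) * h ^ (s + s') := by
  obtain ⟨p, hp, rfl⟩ : ∃ p, 0 ≤ p ∧ s = -(p + s') := ⟨-s - s', by linarith, by ring⟩
  rw [show -(-(p + s')) - s' = p by ring, neg_neg, show -(p + s') + s' = -p by ring]
  have amgm := rpow_div_mul_rpow_div_le hp hs' hh.le hx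
  rw [div_rpow hh.le hp, div_rpow hx hs', div_rpow (by positivity) (by positivity)] at amgm
  have := rpow_self_pos hp
  have := rpow_self_pos hs'
  have := rpow_self_pos (add_nonneg hp hs')
  rw [rpow_neg (by positivity), rpow_neg hh.le]
  field_simp at amgm ⊢
  linarith

lemma add_rpow_mul_rpow_at_critical_point {h s s' : ℝ} (hh : 0 < h) (hs' : 0 < s')
    (hss : s + s' < 0) :
    (h + s' * h / (-s - s')) ^ s * (s' * h / (-s - s')) ^ s'
      = s' ^ s' * (-s - s') ^ (-s - s') / (-s) ^ (-s) * h ^ (s + s') := by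
  obtain ⟨p, hp, rfl⟩ : ∃ p, 0 < p ∧ s = -(p + s') := ⟨-s - s', by linarith, by ring⟩
  rw [show -(-(p + s')) - s' = p by ring, neg_neg, show -(p + s') + s' = -p by ring,
    show h + s' * h / p = (p + s') * h / p by field_simp]
  rw [rpow_neg (by positivity), rpow_neg hh.le, div_rpow (by positivity) hp.le,
    div_rpow (by positivity) hp.le, mul_rpow (by positivity) hh.le, mul_rpow hs'.le hh.le,
    rpow_add hp, rpow_add hh]
  field_simp

lemma tendsto_rpow_nhdsGT_zero_nhds_zero_iff {t : ℝ} :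
    Tendsto (fun x : ℝ => x ^ t) (𝓝[>] 0) (𝓝 0) ↔ 0 < t := by
  refine ⟨fun hlim => ?_, fun ht => ?_⟩
  · by_contra! ht
    have hge : ∀ᶠ x in 𝓝[>] (0 : ℝ), 1 ≤ x ^ t := by
      filter_upwards [Ioo_mem_nhdsGT one_pos] with x hx
      exact one_le_rpow_of_pos_of_le_one_of_nonpos hx.1 hx.2.le ht
    linarith [ge_of_tendsto hlim hge]
  · simpa [zero_rpow ht.ne'] using
      (continuousAt_rpow_const 0 t (Or.inr ht.le)).tendsto.mono_left nhdsWithin_le_nhds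

lemma tendsto_rpow_atTop_nhds_zero_iff {t : ℝ} :
    Tendsto (fun x : ℝ => x ^ t) atTop (𝓝 0) ↔ t < 0 := by
  refine ⟨fun hlim => ?_, fun ht => ?_⟩
  · by_contra! ht
    have hge : ∀ᶠ x in atTop, (1 : ℝ) ≤ x ^ t := by
      filter_upwards [eventually_ge_atTop 1] with x hx
      exact one_le_rpow hx ht
    linarith [ge_of_tendsto hlim hge]
  · simpa using tendsto_rpow_neg_atTop (neg_pos.2 ht)

lemma isEquivalent_add_rpow_mul_rpow_nhdsGT_zero {h : ℝ} (hh : 0 < h) (s s' : ℝ) :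
    (fun x : ℝ => (h + x) ^ s * x ^ s') ~[𝓝[>] 0] fun x => h ^ s * x ^ s' := by
  have hlim : Tendsto (fun x : ℝ => (h + x) ^ s) (𝓝[>] 0) (𝓝 (h ^ s)) := by
    have := ((continuous_const.add continuous_id).tendsto (0 : ℝ)).rpow_const (p := s)
      (Or.inl (by simpa using hh.ne'))
    simpa using this.mono_left nhdsWithin_le_nhds
  exact ((isEquivalent_const_iff_tendsto (rpow_pos_of_pos hh s).ne').2 hlim).mul
    IsEquivalent.refl

lemma isEquivalent_add_rpow_mul_rpow_atTop (h s s' : ℝ) :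
    (fun x : ℝ => (h + x) ^ s * x ^ s') ~[atTop] fun x => x ^ (s + s') := by
  refine isEquivalent_iff_exists_eq_mul.2 ⟨fun x => (1 + h / x) ^ s, ?_, ?_⟩
  · simpa using ((tendsto_const_nhds.div_atTop tendsto_id).const_add 1).rpow_const
      (p := s) (Or.inl (by norm_num))
  · filter_upwards [eventually_gt_atTop (max 0 (-h))] with x hx
    have hx0 : 0 < x := (le_max_left _ _).trans_lt hx
    have hhx : 0 < h + x := by linarith [le_max_right 0 (-h)]
    rw [Pi.mul_apply, show 1 + h / x = (h + x) / x by field_simp; ring,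
      div_rpow hhx.le hx0.le, rpow_add hx0]
    field_simp

lemma not_bddAbove_range_of_tendsto_atTop {α β : Type*} [Preorder β] [NoMaxOrder β]
    {S : Set α} {f : α → β} {l : Filter α} [l.NeBot] (hl : l ≤ 𝓟 S)
    (hf : Tendsto f l atTop) : ¬BddAbove (range fun x : S => f x) :=
  have := comap_coe_neBot_of_le_principal hl
  not_bddAbove_of_tendsto_atTop (hf.comp tendsto_comap)

lemma le_ciSup_of_tendsto {α β : Type*} [ConditionallyCompleteLinearOrder β]
    [TopologicalSpace β] [OrderClosedTopology β]
    {S : Set α} {f : α → β} {l : Filter α} [l.NeBot] (hl : l ≤ 𝓟 S)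
    (hf : BddAbove (range fun x : S => f x)) {c : β} (hc : Tendsto f l (𝓝 c)) :
    c ≤ ⨆ x : S, f x :=
  have := comap_coe_neBot_of_le_principal hl
  le_of_tendsto' (hc.comp tendsto_comap) (le_ciSup hf)

section

variable {h s s' : ℝ}

lemma bddAbove_range_add_rpow_mul_rpow_iff (hh : 0 < h) :
    BddAbove (range fun x : Ioi (0 : ℝ) => (h + (x : ℝ)) ^ s * (x : ℝ) ^ s')
      ↔ 0 ≤ s' ∧ s + s' ≤ 0 := by
  refine ⟨fun hb => ⟨?_, ?_⟩, fun ⟨hs', hss⟩ =>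
    ⟨_, forall_mem_range.2 fun x => add_rpow_mul_rpow_le hh x.2.le hs' hss⟩⟩
  · by_contra! hs'
    refine not_bddAbove_range_of_tendsto_atTop (f := fun x : ℝ => (h + x) ^ s * x ^ s')
      (l := 𝓝[>] 0) inf_le_right ?_ hb
    exact (isEquivalent_add_rpow_mul_rpow_nhdsGT_zero hh s s').symm.tendsto_atTop
      ((tendsto_rpow_neg_nhdsGT_zero hs').const_mul_atTop (rpow_pos_of_pos hh s))
  · by_contra! hss
    refine not_bddAbove_range_of_tendsto_atTop (f := fun x : ℝ => (h + x) ^ s * x ^ s')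
      (l := atTop) (le_principal_iff.2 (Ioi_mem_atTop 0)) ?_ hb
    exact (isEquivalent_add_rpow_mul_rpow_atTop h s s').symm.tendsto_atTop
      (tendsto_rpow_atTop hss)

lemma iSup_add_rpow_mul_rpow (hh : 0 < h) (hs' : 0 ≤ s') (hss : s + s' ≤ 0) :
    ⨆ x : Ioi (0 : ℝ), (h + (x : ℝ)) ^ s * (x : ℝ) ^ s'
      = s' ^ s' * (-s - s') ^ (-s - s') / (-s) ^ (-s) * h ^ (s + s') := by
  have hbdd := (bddAbove_range_add_rpow_mul_rpow_iff hh).2 ⟨hs', hss⟩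
  refine le_antisymm (ciSup_le fun x => add_rpow_mul_rpow_le hh x.2.le hs' hss) ?_
  rcases hs'.eq_or_lt with rfl | hs'
  · refine le_ciSup_of_tendsto (l := 𝓝[>] (0 : ℝ)) inf_le_right hbdd
      ((isEquivalent_add_rpow_mul_rpow_nhdsGT_zero hh s 0).tendsto_nhds_iff.2 ?_)
    simp [(rpow_self_pos (by linarith : 0 ≤ -s)).ne']
  rcases hss.eq_or_lt with hss | hss
  · refine le_ciSup_of_tendsto (le_principal_iff.2 (Ioi_mem_atTop 0)) hbdd
      ((isEquivalent_add_rpow_mul_rpow_atTop h s s').tendsto_nhds_iff.2 ?_)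
    rw [show -s - s' = 0 by linarith, show -s = s' by linarith, hss]
    simp [(rpow_pos_of_pos hs' s').ne']
  · have hcrit : 0 < s' * h / (-s - s') := div_pos (by positivity) (by linarith)
    rw [← add_rpow_mul_rpow_at_critical_point hh hs' hss]
    exact le_ciSup hbdd ⟨_, hcrit⟩

lemma tendsto_add_rpow_mul_rpow_nhds_zero_iff (hh : 0 < h) :
    (Tendsto (fun x : ℝ => (h + x) ^ s * x ^ s') (𝓝[>] 0) (𝓝 0) ∧
      Tendsto (fun x : ℝ => (h + x) ^ s * x ^ s') atTop (𝓝 0)) ↔ 0 < s' ∧ s + s' < 0 := by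
  have hconst := tendsto_const_smul_iff₀ (f := fun x : ℝ => x ^ s') (l := 𝓝[>] (0 : ℝ))
    (a := 0) (rpow_pos_of_pos hh s).ne'
  simp only [smul_eq_mul, mul_zero] at hconst
  rw [(isEquivalent_add_rpow_mul_rpow_nhdsGT_zero hh s s').tendsto_nhds_iff,
    (isEquivalent_add_rpow_mul_rpow_atTop h s s').tendsto_nhds_iff, hconst,
    tendsto_rpow_nhdsGT_zero_nhds_zero_iff, tendsto_rpow_atTop_nhds_zero_iff]

end

/-- For `h > 0` and `s, s' ∈ ℝ`, the function
`h' ↦ (h+h')^s h'^{s'}` is bounded on `(0,∞)` iff `s' ≥ 0` and `s+s' ≤ 0`, in which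
case its supremum equals `s'^{s'} (−s−s')^{−s−s'} / (−s)^{−s} · h^{s+s'}` (with
`0^0 = 1`, as for `Real.rpow`); and it tends to `0` both as `h' → 0⁺` and as
`h' → ∞` iff `s' > 0` and `s+s' < 0`. -/
theorem stmt_18 (h s s' : ℝ) (hh : 0 < h) :
    (BddAbove (Set.range fun h' : Set.Ioi (0 : ℝ) =>
        (h + (h' : ℝ)) ^ s * (h' : ℝ) ^ s') ↔ (0 ≤ s' ∧ s + s' ≤ 0)) ∧
    ((0 ≤ s' ∧ s + s' ≤ 0) →
      (⨆ h' : Set.Ioi (0 : ℝ), (h + (h' : ℝ)) ^ s * (h' : ℝ) ^ s')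
        = s' ^ s' * (-s - s') ^ (-s - s') / (-s) ^ (-s) * h ^ (s + s')) ∧
    ((Tendsto (fun h' : ℝ => (h + h') ^ s * h' ^ s')
        (nhdsWithin 0 (Set.Ioi 0)) (nhds 0) ∧
      Tendsto (fun h' : ℝ => (h + h') ^ s * h' ^ s') atTop (nhds 0)) ↔
      (0 < s' ∧ s + s' < 0)) :=
  ⟨bddAbove_range_add_rpow_mul_rpow_iff hh,
    fun ⟨hs', hss⟩ => iSup_add_rpow_mul_rpow hh hs' hss,
    tendsto_add_rpow_mul_rpow_nhds_zero_iff hh⟩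
end
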